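/- Let A ∈ ℝ^{n×n} with A_sym := (A+Aᵀ)/2 positive definite, ε > 0, and let P₀ ∈ ℝ^{n×n} be symmetric positive semidefinite. Then: (i) for every t ≥ 0 the matrix I_n + (exp((t/ε)Aᵀ)·exp((t/ε)A) − I_n)·P₀ is invertible; and (ii) the function P(t) := exp((t/ε)A)·P₀·(I_n + (exp((t/ε)Aᵀ)·exp((t/ε)A) − I_n)·P₀)⁻¹·exp((t/ε)Aᵀ) satisfies P(0) = P₀ and the Riccati differential equation ε·(d/dt)P(t) = A·P(t) + P(t)·Aᵀ − P(t)·(A+Aᵀ)·P(t) for all t ≥ 0. -/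

import Mathlib

/-!
Write `E(τ) = exp(τA)`. Since `d/dτ yᵀE(τ)ᵀE(τ)y = (E(τ)y)ᵀ(A + Aᵀ)(E(τ)y) ≥ 0`, the matrix
`M = E(τ)ᵀE(τ) - 1` has a nonnegative quadratic form for `τ ≥ 0`. Then `1 + M P₀` is invertible:
if `(1 + M P₀)x = 0` then `(P₀x)ᵀM(P₀x) = -xᵀP₀x`, both sides vanish, so `P₀x = 0` and `x = 0`.
The Riccati equation follows from the product rule and `(Q⁻¹)' = -Q⁻¹Q'Q⁻¹` with
`Q(τ) = 1 + M(τ)P₀`, `Q' = Eᵀ(A + Aᵀ)E P₀`, after rescaling time by `ε`.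
-/

open Matrix NormedSpace

section

variable {ι : Type*} [Fintype ι] [DecidableEq ι]

-- Any algebra norm would do: statements only involve the norm-independent topology of matrices.
attribute [local instance] Matrix.linftyOpNormedAddCommGroup Matrix.linftyOpNormedRing
  Matrix.linftyOpNormedAlgebra

theorem HasDerivAt.matrix_apply {M : ℝ → Matrix ι ι ℝ} {M' : Matrix ι ι ℝ} {t : ℝ}
    (hM : HasDerivAt M M' t) (i j : ι) :
    HasDerivAt (fun s => M s i j) (M' i j) t :=
  (LinearMap.toContinuousLinearMap (Matrix.entryLinearMap ℝ ℝ i j)).hasFDerivAt.comp_hasDerivAt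
    t hM

theorem HasDerivAt.matrix_inv {Q : ℝ → Matrix ι ι ℝ} {Q' : Matrix ι ι ℝ} {t : ℝ}
    (hQ : HasDerivAt Q Q' t) (hu : IsUnit (Q t)) :
    HasDerivAt (fun s => (Q s)⁻¹) (-((Q t)⁻¹ * Q' * (Q t)⁻¹)) t := by
  have hinv := hasFDerivAt_ringInverse (𝕜 := ℝ) hu.unit
  rw [hu.unit_spec] at hinv
  have hunit_inv : (↑hu.unit⁻¹ : Matrix ι ι ℝ) = (Q t)⁻¹ := by
    rw [nonsing_inv_eq_ringInverse, ← Ring.inverse_unit, hu.unit_spec]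
  have h := hinv.comp_hasDerivAt t hQ
  simp only [Function.comp_def, hunit_inv, ← nonsing_inv_eq_ringInverse] at h
  exact h

theorem hasDerivAt_dotProduct_mulVec {M : ℝ → Matrix ι ι ℝ} {M' : Matrix ι ι ℝ} {t : ℝ}
    (hM : HasDerivAt M M' t) (y : ι → ℝ) :
    HasDerivAt (fun s => y ⬝ᵥ M s *ᵥ y) (y ⬝ᵥ M' *ᵥ y) t := by
  simp only [dotProduct, mulVec]
  exact HasDerivAt.fun_sum fun i _ =>
    (HasDerivAt.fun_sum fun j _ => (hM.matrix_apply i j).mul_const (y j)).const_mul (y i)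

theorem hasDerivAt_exp_smul_transpose_mul_exp_smul (A : Matrix ι ι ℝ) (τ : ℝ) :
    HasDerivAt (fun s : ℝ => exp (s • Aᵀ) * exp (s • A))
      (exp (τ • Aᵀ) * (A + Aᵀ) * exp (τ • A)) τ := by
  have hsum : exp (τ • Aᵀ) * Aᵀ * exp (τ • A) + exp (τ • Aᵀ) * (A * exp (τ • A)) =
      exp (τ • Aᵀ) * (A + Aᵀ) * exp (τ • A) := by
    noncomm_ring
  exact ((hasDerivAt_exp_smul_const Aᵀ τ).mul (hasDerivAt_exp_smul_const' A τ)).congr_deriv hsum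

theorem monotone_dotProduct_exp_smul_transpose_mul_exp_smul_mulVec {A : Matrix ι ι ℝ}
    (hA : (A + Aᵀ).PosSemidef) (y : ι → ℝ) :
    Monotone fun τ : ℝ => y ⬝ᵥ (exp (τ • Aᵀ) * exp (τ • A)) *ᵥ y := by
  have hderiv τ := hasDerivAt_dotProduct_mulVec (hasDerivAt_exp_smul_transpose_mul_exp_smul A τ) y
  refine monotone_of_deriv_nonneg (fun τ => (hderiv τ).differentiableAt) fun τ => ?_
  rw [(hderiv τ).deriv, ← transpose_smul, exp_transpose, ← mulVec_mulVec, ← mulVec_mulVec,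
    dotProduct_mulVec, vecMul_transpose]
  simpa using hA.dotProduct_mulVec_nonneg (exp (τ • A) *ᵥ y)

theorem isUnit_one_add_mul_of_posSemidef {M P : Matrix ι ι ℝ} (hM : ∀ y, 0 ≤ y ⬝ᵥ M *ᵥ y)
    (hP : P.PosSemidef) : IsUnit (1 + M * P) := by
  rw [isUnit_iff_isUnit_det, isUnit_iff_ne_zero]
  intro hdet
  obtain ⟨x, hx, hMPx⟩ := exists_mulVec_eq_zero_iff.mpr hdet
  rw [add_mulVec, one_mulVec, ← mulVec_mulVec] at hMPx
  have hMPx' : M *ᵥ (P *ᵥ x) = -x := eq_neg_of_add_eq_zero_right hMPx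
  have hPx : P *ᵥ x = 0 := by
    have hMq := hM (P *ᵥ x)
    have hPq : 0 ≤ x ⬝ᵥ P *ᵥ x := by simpa using hP.dotProduct_mulVec_nonneg x
    rw [hMPx', dotProduct_neg, dotProduct_comm] at hMq
    exact (hP.dotProduct_mulVec_zero_iff x).mp (by simpa using le_antisymm (by linarith) hPq)
  rw [hPx, mulVec_zero] at hMPx'
  exact hx (neg_eq_zero.mp hMPx'.symm)

theorem isUnit_one_add_exp_smul_transpose_mul_exp_smul_sub_one_mul {A P₀ : Matrix ι ι ℝ}
    (hA : (A + Aᵀ).PosSemidef) (hP₀ : P₀.PosSemidef) {τ : ℝ} (hτ : 0 ≤ τ) :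
    IsUnit (1 + (exp (τ • Aᵀ) * exp (τ • A) - 1) * P₀) := by
  refine isUnit_one_add_mul_of_posSemidef (fun y => ?_) hP₀
  have := monotone_dotProduct_exp_smul_transpose_mul_exp_smul_mulVec hA y hτ
  simp only [zero_smul, exp_zero, one_mul, one_mulVec] at this
  rw [sub_mulVec, one_mulVec, dotProduct_sub]
  linarith

def ojaRiccatiField (A X : Matrix ι ι ℝ) : Matrix ι ι ℝ :=
  A * X + X * Aᵀ - X * (A + Aᵀ) * X

noncomputable def ojaRiccatiSolution (A P₀ : Matrix ι ι ℝ) (τ : ℝ) : Matrix ι ι ℝ :=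
  exp (τ • A) * P₀ * (1 + (exp (τ • Aᵀ) * exp (τ • A) - 1) * P₀)⁻¹ * exp (τ • Aᵀ)

theorem ojaRiccatiSolution_zero (A P₀ : Matrix ι ι ℝ) : ojaRiccatiSolution A P₀ 0 = P₀ := by
  simp [ojaRiccatiSolution]

theorem hasDerivAt_ojaRiccatiSolution (A P₀ : Matrix ι ι ℝ) {τ : ℝ}
    (hu : IsUnit (1 + (exp (τ • Aᵀ) * exp (τ • A) - 1) * P₀)) :
    HasDerivAt (ojaRiccatiSolution A P₀) (ojaRiccatiField A (ojaRiccatiSolution A P₀ τ)) τ := by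
  have hQ : HasDerivAt (fun s : ℝ => 1 + (exp (s • Aᵀ) * exp (s • A) - 1) * P₀)
      (exp (τ • Aᵀ) * (A + Aᵀ) * exp (τ • A) * P₀) τ :=
    (((hasDerivAt_exp_smul_transpose_mul_exp_smul A τ).sub_const 1).mul_const P₀).const_add 1
  refine ((((hasDerivAt_exp_smul_const' A τ).mul_const P₀).mul (hQ.matrix_inv hu)).mul
    (hasDerivAt_exp_smul_const Aᵀ τ)).congr_deriv ?_
  have hriccati : ∀ E E' G : Matrix ι ι ℝ,
      (A * E * P₀ * G + E * P₀ * -(G * (E' * (A + Aᵀ) * E * P₀) * G)) * E' +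
          E * P₀ * G * (E' * Aᵀ) = ojaRiccatiField A (E * P₀ * G * E') := fun E E' G => by
    simp only [ojaRiccatiField]; noncomm_ring
  exact hriccati _ _ _

theorem hasDerivAt_ojaRiccatiSolution_div (A P₀ : Matrix ι ι ℝ) (ε : ℝ) {t : ℝ}
    (hu : IsUnit (1 + (exp ((t / ε) • Aᵀ) * exp ((t / ε) • A) - 1) * P₀)) :
    HasDerivAt (fun s => ojaRiccatiSolution A P₀ (s / ε))
      (ε⁻¹ • ojaRiccatiField A (ojaRiccatiSolution A P₀ (t / ε))) t := by
  have h := (hasDerivAt_ojaRiccatiSolution A P₀ hu).scomp t ((hasDerivAt_id t).div_const ε)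
  simp only [id, one_div] at h
  exact h

end

theorem explicit_solution_of_oja_riccati
    (n : ℕ) (A : Matrix (Fin n) (Fin n) ℝ)
    (hA : (((2:ℝ)⁻¹) • (A + Aᵀ)).PosDef)
    (ε : ℝ) (hε : 0 < ε)
    (P₀ : Matrix (Fin n) (Fin n) ℝ) (hP₀ : P₀.PosSemidef)
    (P : ℝ → Matrix (Fin n) (Fin n) ℝ)
    (hP : ∀ t, P t = exp ((t / ε) • A) * P₀ *
      ((1 : Matrix (Fin n) (Fin n) ℝ) +
        (exp ((t / ε) • Aᵀ) * exp ((t / ε) • A) - 1) * P₀)⁻¹ *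
      exp ((t / ε) • Aᵀ)) :
    (∀ t ∈ Set.Ici (0:ℝ),
      IsUnit ((1 : Matrix (Fin n) (Fin n) ℝ) +
        (exp ((t / ε) • Aᵀ) * exp ((t / ε) • A) - 1) * P₀)) ∧
    P 0 = P₀ ∧
    ∃ P' : ℝ → Matrix (Fin n) (Fin n) ℝ,
      (∀ t ∈ Set.Ici (0:ℝ), ∀ i j,
        HasDerivWithinAt (fun s => P s i j) (P' t i j) (Set.Ici (0:ℝ)) t) ∧
      (∀ t ∈ Set.Ici (0:ℝ),
        ε • P' t = A * P t + P t * Aᵀ - P t * (A + Aᵀ) * P t) := by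
  have hP_eq : P = fun t => ojaRiccatiSolution A P₀ (t / ε) := funext hP
  have hA_sym : (A + Aᵀ).PosSemidef := by
    simpa using hA.posSemidef.smul (zero_le_two : (0 : ℝ) ≤ 2)
  have hunit : ∀ t ∈ Set.Ici (0:ℝ), IsUnit ((1 : Matrix (Fin n) (Fin n) ℝ) +
      (exp ((t / ε) • Aᵀ) * exp ((t / ε) • A) - 1) * P₀) := fun t ht =>
    isUnit_one_add_exp_smul_transpose_mul_exp_smul_sub_one_mul hA_sym hP₀
      (div_nonneg ht hε.le)
  refine ⟨hunit, by simp only [hP_eq, zero_div, ojaRiccatiSolution_zero],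
    fun t => ε⁻¹ • ojaRiccatiField A (P t), fun t ht i j => ?_,
    fun t _ => by rw [smul_smul, mul_inv_cancel₀ hε.ne', one_smul, ojaRiccatiField]⟩
  rw [hP_eq]
  exact ((hasDerivAt_ojaRiccatiSolution_div A P₀ ε (hunit t ht)).matrix_apply i j
    ).hasDerivWithinAt
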